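/- Let (ν_t)_{t∈[0,T]} be an adapted M_+(E)-valued process on a filtered probability space with ν_0 deterministic, such that for every φ ∈ C(E) the process t ↦ ⟨φ, ν_t⟩ is a martingale. Then for every t ∈ [0,T], almost surely supp(ν_t) ⊆ supp(ν_0). -/

import Mathlib

/-!
The support `S` of `ν₀` is closed in `E`, hence the zero set of a continuous `φ ≥ 0` on `E`.
Then `⟨φ, ν₀⟩ = 0`, so the non-negative martingale `⟨φ, ν_t⟩` has mean zero and vanishes
almost surely; `⟨φ, ν_t⟩ = 0` forces `ν_t` to be carried by the closed set `S`.
-/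

open MeasureTheory Set Filter

noncomputable section

/-- `M₊(E)`: finite non-negative Borel measures on `E = [0,T]`, with the weak topology. -/
abbrev MV (T : ℝ) := MeasureTheory.FiniteMeasure (Set.Icc (0:ℝ) T)

/-- `⟨φ, ν⟩ = ∫_E φ(x) ν(dx)`. -/
def pairF {T : ℝ} (φ : ℝ → ℝ) (ν : MV T) : ℝ :=
  ∫ x, φ (x : ℝ) ∂(ν : Measure (Set.Icc (0:ℝ) T))

/-- `φ ∈ D₁`: (the restriction to `E` of) a smooth function on `ℝ` with `φ'(0) = 0`. -/
def memD1 (φ : ℝ → ℝ) : Prop := ContDiff ℝ (⊤ : ℕ∞) φ ∧ deriv φ 0 = 0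

/-- A real-valued martingale on the time interval `[a,b]` w.r.t. filtration `ℱ` and measure `Q`. -/
def IsMartOn {Ω : Type*} {m0 : MeasurableSpace Ω} (ℱ : MeasureTheory.Filtration ℝ m0)
    (Q : MeasureTheory.Measure Ω) (a b : ℝ) (X : ℝ → Ω → ℝ) : Prop :=
  (∀ t ∈ Set.Icc a b,
      MeasureTheory.Integrable (X t) Q ∧ StronglyMeasurable[ℱ t] (X t)) ∧
  ∀ s t, s ∈ Set.Icc a b → t ∈ Set.Icc a b → s ≤ t → Q[X t | ℱ s] =ᵐ[Q] X s

/-- A real-valued local martingale on `[a,b]`: there are stopping times increasing a.s. to `b`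
such that each stopped process is a martingale on `[a,b]`. -/
def IsLocalMartOn {Ω : Type*} {m0 : MeasurableSpace Ω} (ℱ : MeasureTheory.Filtration ℝ m0)
    (Q : MeasureTheory.Measure Ω) (a b : ℝ) (X : ℝ → Ω → ℝ) : Prop :=
  ∃ τ : ℕ → Ω → ℝ,
    (∀ n, MeasureTheory.IsStoppingTime ℱ (fun ω => (τ n ω : WithTop ℝ))) ∧
    (∀ᵐ ω ∂Q, Monotone (fun n => τ n ω) ∧
      Filter.Tendsto (fun n => τ n ω) Filter.atTop (nhds b)) ∧
    ∀ n, IsMartOn ℱ Q a b (fun t ω => X (min t (τ n ω)) ω)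

/-- The HJM drift condition: for all `φ ∈ D₁`, `⟨φ, μ_t⟩ + ∫_0^t ⟨φ', μ_s⟩ ds`
is a local martingale on `[0,T]`. -/
def HJMdrift {T : ℝ} {Ω : Type*} {m0 : MeasurableSpace Ω} (ℱ : MeasureTheory.Filtration ℝ m0)
    (Q : MeasureTheory.Measure Ω) (μ : ℝ → Ω → MV T) : Prop :=
  ∀ φ : ℝ → ℝ, memD1 φ →
    IsLocalMartOn ℱ Q 0 T (fun t ω =>
      pairF φ (μ t ω) + ∫ s in (0:ℝ)..t, pairF (deriv φ) (μ s ω))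

/-- Topological support of a measure: points all of whose open neighbourhoods have
positive measure. -/
def msupport {X : Type*} [TopologicalSpace X] [MeasurableSpace X]
    (μ : MeasureTheory.Measure X) : Set X :=
  {x | ∀ U : Set X, IsOpen U → x ∈ U → 0 < μ U}

theorem msupport_eq_support {X : Type*} [TopologicalSpace X] [MeasurableSpace X]
    (μ : Measure X) : msupport μ = μ.support := by
  ext x
  simp only [msupport, Measure.support_eq_forall_isOpen, mem_ofPred_eq]
  exact forall_congr' fun U => imp.swap

theorem isClosed_msupport {X : Type*} [TopologicalSpace X] [MeasurableSpace X]
    (μ : Measure X) : IsClosed (msupport μ) :=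
  msupport_eq_support μ ▸ Measure.isClosed_support

theorem MeasureTheory.Measure.support_subset_preimage_zero_iff_integral_eq_zero {X : Type*}
    [TopologicalSpace X] [HereditarilyLindelofSpace X] [MeasurableSpace X] {μ : Measure X}
    {f : X → ℝ} (hf : Continuous f) (hf0 : 0 ≤ᵐ[μ] f) (hfi : Integrable f μ) :
    μ.support ⊆ f ⁻¹' {0} ↔ ∫ x, f x ∂μ = 0 := by
  rw [integral_eq_zero_iff_of_nonneg_ae hf0 hfi]
  refine ⟨fun h => ?_, fun h => Measure.support_subset_of_isClosed
    (isClosed_singleton.preimage hf) h⟩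
  filter_upwards [Measure.support_mem_ae (μ := μ)] with x hx using h hx

theorem IsMartOn.ae_eq_zero_of_nonneg {Ω : Type*} {m0 : MeasurableSpace Ω}
    {ℱ : Filtration ℝ m0} {Q : Measure Ω} [IsFiniteMeasure Q] {a b t : ℝ} {X : ℝ → Ω → ℝ}
    (hX : IsMartOn ℱ Q a b X) (ht : t ∈ Icc a b) (hXt : 0 ≤ᵐ[Q] X t) (hXa : X a =ᵐ[Q] 0) :
    X t =ᵐ[Q] 0 := by
  have ha : a ∈ Icc a b := ⟨le_rfl, ht.1.trans ht.2⟩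
  refine (integral_eq_zero_iff_of_nonneg_ae hXt (hX.1 t ht).1).mp ?_
  calc ∫ ω, X t ω ∂Q = ∫ ω, Q[X t | ℱ a] ω ∂Q := (integral_condExp (ℱ.le a)).symm
    _ = ∫ ω, X a ω ∂Q := integral_congr_ae (hX.2 a t ha ht ht.1)
    _ = 0 := integral_eq_zero_of_ae hXa

theorem exists_continuous_nonneg_preimage_zero_eq_Icc {a b : ℝ} (hab : a ≤ b)
    {S : Set (Icc a b)} (hS : IsClosed S) :
    ∃ φ : ℝ → ℝ, Continuous φ ∧ 0 ≤ φ ∧ (fun x : Icc a b => φ x) ⁻¹' {0} = S := by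
  obtain ⟨f, rfl, hf01⟩ := perfectlyNormalSpace_iff_forall_isClosed_preimage_zero.mp
    inferInstance S hS
  refine ⟨IccExtend hab f, continuous_IccExtend_iff.mpr f.continuous,
    fun x => (hf01 _).1, ?_⟩
  simp only [IccExtend_val]

theorem msupport_subset_preimage_zero_iff_pairF_eq_zero {T : ℝ} (ν : MV T) {φ : ℝ → ℝ}
    (hφ : Continuous φ) (hφ0 : 0 ≤ φ) :
    msupport (ν : Measure (Icc (0:ℝ) T)) ⊆ (fun x : Icc (0:ℝ) T => φ x) ⁻¹' {0} ↔
      pairF φ ν = 0 := by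
  have hc : Continuous (fun x : Icc (0:ℝ) T => φ x) := hφ.comp continuous_subtype_val
  rw [msupport_eq_support]
  exact Measure.support_subset_preimage_zero_iff_integral_eq_zero hc
    (ae_of_all _ fun x => hφ0 x)
    (hc.integrable_of_hasCompactSupport (HasCompactSupport.of_compactSpace _))

theorem stmt12_general {T : ℝ}
    {Ω : Type*} {m0 : MeasurableSpace Ω} (ℱ : Filtration ℝ m0)
    (Q : Measure Ω) [IsProbabilityMeasure Q]
    (ν : ℝ → Ω → MV T)
    (ν₀ : MV T) (hν₀ : ∀ ω, ν 0 ω = ν₀)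
    (hmart : ∀ φ : ℝ → ℝ, ContinuousOn φ (Icc (0:ℝ) T) →
      IsMartOn ℱ Q 0 T (fun t ω => pairF φ (ν t ω))) :
    ∀ t ∈ Icc (0:ℝ) T, ∀ᵐ ω ∂Q,
      msupport ((ν t ω : Measure (Icc (0:ℝ) T)))
        ⊆ msupport ((ν₀ : Measure (Icc (0:ℝ) T))) := by
  intro t ht
  obtain ⟨φ, hφ, hφ0, hzero⟩ := exists_continuous_nonneg_preimage_zero_eq_Icc
    (ht.1.trans ht.2) (isClosed_msupport _)
  have hpair (μ : MV T) := msupport_subset_preimage_zero_iff_pairF_eq_zero μ hφ hφ0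
  have hstart : pairF φ ν₀ = 0 := (hpair ν₀).mp hzero.ge
  have hnonneg (ω : Ω) : 0 ≤ pairF φ (ν t ω) := integral_nonneg fun x => hφ0 x
  filter_upwards [(hmart φ hφ.continuousOn).ae_eq_zero_of_nonneg ht (ae_of_all _ hnonneg)
    (ae_of_all _ fun ω => by simp only [hν₀, hstart, Pi.zero_apply])] with ω hω
  exact hzero ▸ (hpair (ν t ω)).mpr hω

/-- **Support stability for measure-valued martingales.** If `(ν_t)` is an adapted
`M₊(E)`-valued process with deterministic `ν_0` such that `⟨φ, ν_t⟩` is a martingale for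
every `φ ∈ C(E)`, then for every `t ∈ [0,T]`, almost surely `supp(ν_t) ⊆ supp(ν_0)`. -/
theorem stmt12 {T : ℝ} (hT : 0 < T)
    {Ω : Type*} {m0 : MeasurableSpace Ω} (ℱ : Filtration ℝ m0)
    (Q : Measure Ω) [IsProbabilityMeasure Q]
    (ν : ℝ → Ω → MV T)
    (hadapted : ∀ t : ℝ, ∀ s : Set (Icc (0:ℝ) T), MeasurableSet s →
      Measurable[ℱ t] (fun ω => (ν t ω : Measure (Icc (0:ℝ) T)) s))
    (ν₀ : MV T) (hν₀ : ∀ ω, ν 0 ω = ν₀)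
    (hmart : ∀ φ : ℝ → ℝ, ContinuousOn φ (Icc (0:ℝ) T) →
      IsMartOn ℱ Q 0 T (fun t ω => pairF φ (ν t ω))) :
    ∀ t ∈ Icc (0:ℝ) T, ∀ᵐ ω ∂Q,
      msupport ((ν t ω : Measure (Icc (0:ℝ) T)))
        ⊆ msupport ((ν₀ : Measure (Icc (0:ℝ) T))) :=
  stmt12_general ℱ Q ν ν₀ hν₀ hmart
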